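/- Let A_1, …, A_k be finite abelian groups and suppose the multilinear map φ : A_1 × ⋯ × A_k → ℝ/ℤ is the sum of multilinear maps φ_1, …, φ_r where for each i the map φ_i factors through m_{q_i} for some prime power q_i. Then bias(φ) ≥ q_1^{-1} q_2^{-1} ⋯ q_r^{-1}. -/

import Mathlib

open scoped ComplexOrder

/-- A map of (dependent) products of abelian groups is multiadditive (multilinear over ℤ)
if it is additive in each coordinate separately. -/
def IsMultiadditive {ι : Type} [DecidableEq ι] {A : ι → Type} [∀ i, AddCommGroup (A i)]
    {B : Type} [AddCommMonoid B] (φ : (∀ i, A i) → B) : Prop :=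
  ∀ (i : ι) (x : ∀ j, A j) (a b : A i),
    φ (Function.update x i (a + b)) = φ (Function.update x i a) + φ (Function.update x i b)

/-- The standard character `e(x) = exp(2πix)` of `ℝ/ℤ`. -/
noncomputable def eChar (x : AddCircle (1 : ℝ)) : ℂ := AddCircle.toCircle x

/-- The bias of a map `A_1 × ⋯ × A_k → ℝ/ℤ`. -/
noncomputable def bias {ι : Type} [Fintype ι] [DecidableEq ι] {A : ι → Type}
    [∀ i, Fintype (A i)] (φ : (∀ i, A i) → AddCircle (1 : ℝ)) : ℂ :=
  (∑ x : ∀ i, A i, eChar (φ x)) / (Fintype.card (∀ i, A i) : ℂ)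

/-- The bilinear map `m_q : ℤ/q × ℤ/q → ℝ/ℤ`, `(x, y) ↦ xy/q mod 1`. -/
noncomputable def mq (q : ℕ) (x y : ZMod q) : AddCircle (1 : ℝ) :=
  (((x.val * y.val : ℕ) : ℝ) / q : ℝ)

/-- A multilinear map `φ : A_1 × ⋯ × A_k → ℝ/ℤ` factors through `m_q` if
`φ(x) = m_q(φ₁(x_I), φ₂(x_{I^c}))` for some `I` with `0 < |I| < k` and multilinear `φ₁, φ₂`. -/
def FactorsThroughMq {ι : Type} [Fintype ι] [DecidableEq ι] {A : ι → Type}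
    [∀ i, AddCommGroup (A i)] (q : ℕ) (φ : (∀ i, A i) → AddCircle (1 : ℝ)) : Prop :=
  ∃ I : Finset ι, I.Nonempty ∧ I ≠ Finset.univ ∧
    ∃ (φ₁ : (∀ i : I, A i) → ZMod q) (φ₂ : (∀ i : (Iᶜ : Finset ι), A i) → ZMod q),
      IsMultiadditive φ₁ ∧ IsMultiadditive φ₂ ∧
      ∀ x : ∀ i, A i, φ x = mq q (φ₁ (fun i => x i)) (φ₂ (fun i => x i))

/-!
Summing `e ∘ φ` for a multilinear `φ` over one coordinate gives `|A_i|` or `0`, according as `φ`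
vanishes on that coordinate line or not; in particular these sums are nonnegative reals.

Supermultiplicativity `bias T * bias S ≤ bias (T + S)`: sum `e(T w + S w')` over pairs
`(w, w')` constrained to agree on a set `s` of coordinates. Enlarging `s` by one coordinate can
only increase the sum, by the one-variable inequality
`(∑ e(f a)) (∑ e(g a)) ≤ |G| ∑ e(f a + g a)` for homomorphisms `f g : G → ℝ/ℤ`; for `s = ∅` the
sum is `bias T * bias S`, for `s` everything it is `bias (T + S)` (up to normalisation).

If `ψ(x) = m_q(φ₁(x_I), φ₂(x_{Iᶜ}))`, then for fixed `x_I` the average over `x_{Iᶜ}` is a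
nonnegative character sum, equal to `1` when `φ₁(x_I) = 0`; so `bias ψ ≥ P[φ₁ = 0]`, and
`q P[φ₁ = 0] = ∑_t E e(t φ₁ / q) ≥ 1` by keeping only the term `t = 0`.
-/

open Finset Function

section CharacterSums

variable {G : Type*} [AddCommGroup G]

lemma eChar_zero : eChar 0 = 1 := by
  simp [eChar]

lemma eChar_add (a b : AddCircle (1 : ℝ)) : eChar (a + b) = eChar a * eChar b := by
  simp [eChar, AddCircle.toCircle_add]

lemma eChar_eq_one_iff {a : AddCircle (1 : ℝ)} : eChar a = 1 ↔ a = 0 := by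
  refine ⟨fun h => AddCircle.injective_toCircle one_ne_zero ?_, fun h => h ▸ eChar_zero⟩
  rw [AddCircle.toCircle_zero]
  exact Subtype.ext h

noncomputable def addCharOfHom (f : G →+ AddCircle (1 : ℝ)) : AddChar G ℂ where
  toFun a := eChar (f a)
  map_zero_eq_one' := by simp [eChar_zero]
  map_add_eq_mul' a b := by simp [eChar_add]

variable [Fintype G]

lemma sum_eChar_eq_zero {f : G →+ AddCircle (1 : ℝ)} (hf : f ≠ 0) : ∑ a, eChar (f a) = 0 := by
  refine AddChar.sum_eq_zero_iff_ne_zero (ψ := addCharOfHom f) |>.2 fun h => hf ?_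
  ext a
  exact eChar_eq_one_iff.1 (DFunLike.congr_fun h a)

lemma sum_eChar_nonneg (f : G →+ AddCircle (1 : ℝ)) : 0 ≤ ∑ a, eChar (f a) := by
  rcases eq_or_ne f 0 with rfl | hf
  · simp [eChar_zero]
  · rw [sum_eChar_eq_zero hf]

lemma sum_eChar_mul_sum_eChar_le (f g : G →+ AddCircle (1 : ℝ)) :
    (∑ a, eChar (f a)) * ∑ a, eChar (g a) ≤ Fintype.card G * ∑ a, eChar (f a + g a) := by
  by_cases h : f = 0 ∧ g = 0
  · obtain ⟨rfl, rfl⟩ := h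
    simp [eChar_zero]
  have hzero : (∑ a, eChar (f a)) * ∑ a, eChar (g a) = 0 := by
    rcases not_and_or.1 h with hf | hg
    · rw [sum_eChar_eq_zero hf, zero_mul]
    · rw [sum_eChar_eq_zero hg, mul_zero]
  rw [hzero]
  exact mul_nonneg (Nat.cast_nonneg _) (sum_eChar_nonneg (f + g))

end CharacterSums

section Multiadditive

variable {ι : Type} [DecidableEq ι] {A : ι → Type} [∀ i, AddCommGroup (A i)]

def IsMultiadditive.lineHom {B : Type} [AddCommGroup B] {h : (∀ i, A i) → B}
    (hh : IsMultiadditive h) (x : ∀ i, A i) (i : ι) : A i →+ B :=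
  AddMonoidHom.mk' (fun a => h (update x i a)) (hh i x)

lemma IsMultiadditive.addMonoidHom_comp {B C : Type} [AddCommMonoid B] [AddCommMonoid C]
    (g : B →+ C) {h : (∀ i, A i) → B} (hh : IsMultiadditive h) :
    IsMultiadditive fun x => g (h x) :=
  fun i x a b => by simp only [hh i x a b, map_add]

lemma isMultiadditive_finset_sum {κ : Type*} {B : Type} [AddCommMonoid B] {ψ : κ → (∀ i, A i) → B}
    (s : Finset κ) (hψ : ∀ j ∈ s, IsMultiadditive (ψ j)) :
    IsMultiadditive fun x => ∑ j ∈ s, ψ j x :=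
  fun i x a b => by rw [← sum_add_distrib]; exact sum_congr rfl fun j hj => hψ j hj i x a b

variable [Fintype ι] [∀ i, Fintype (A i)]

lemma sum_sum_update {M : Type*} [AddCommMonoid M] (i : ι) (F : (∀ j, A j) → M) :
    ∑ x, ∑ a, F (update x i a) = Fintype.card (A i) • ∑ x, F x := by
  have hshift : ∀ x, ∑ a, F (update x i a) = ∑ b, F (x + Pi.single i b) := by
    intro x
    refine Fintype.sum_equiv (Equiv.subRight (x i)) _ _ fun a => congrArg F ?_
    ext j
    rcases eq_or_ne j i with rfl | hj <;> simp [*]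
  simp_rw [hshift]
  rw [sum_comm]
  have htranslate : ∀ c : ∀ j, A j, ∑ x, F (x + c) = ∑ x, F x :=
    fun c => Equiv.sum_comp (Equiv.addRight c) F
  simp only [htranslate, sum_const, card_univ]

lemma sum_eChar_nonneg_of_isMultiadditive [Nonempty ι] {h : (∀ i, A i) → AddCircle (1 : ℝ)}
    (hh : IsMultiadditive h) : 0 ≤ ∑ x, eChar (h x) := by
  obtain ⟨i⟩ := ‹Nonempty ι›
  refine le_of_mul_le_mul_left (a := (Fintype.card (A i) : ℂ)) ?_ (by simp [Fintype.card_pos])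
  rw [mul_zero, ← nsmul_eq_mul, ← sum_sum_update i]
  exact sum_nonneg fun x _ => sum_eChar_nonneg (hh.lineHom x i)

end Multiadditive

lemma piecewise_erase_update {ι : Type*} [DecidableEq ι] {π : ι → Type*} {s : Finset ι} {i : ι}
    (hi : i ∈ s) (x u : ∀ j, π j) (a : π i) :
    (s.erase i).piecewise x (update u i a) = update (s.piecewise x u) i a := by
  rw [← update_piecewise_of_notMem (hi := notMem_erase i s)]
  conv_rhs => rw [← insert_erase hi, piecewise_insert, update_idem]

section Coupling

variable {ι : Type} [Fintype ι] [DecidableEq ι] {A : ι → Type} [∀ i, Fintype (A i)]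
  (T S : (∀ i, A i) → AddCircle (1 : ℝ))

/-- A weighted sum of `e(T w + S w')` over the pairs `(w, w')` that agree on `s`. -/
noncomputable def coupledSum (s : Finset ι) : ℂ :=
  ∑ x, (∑ u, eChar (T (s.piecewise x u))) * ∑ v, eChar (S (s.piecewise x v))

lemma coupledSum_empty :
    coupledSum T S ∅ = Fintype.card (∀ i, A i) * ((∑ x, eChar (T x)) * ∑ x, eChar (S x)) := by
  simp [coupledSum]

lemma coupledSum_univ :
    coupledSum T S univ = Fintype.card (∀ i, A i) ^ 2 * ∑ x, eChar (T x + S x) := by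
  simp only [coupledSum, piecewise_univ, sum_const, card_univ, nsmul_eq_mul, eChar_add, mul_sum]
  exact sum_congr rfl fun x _ => by ring

variable [∀ i, AddCommGroup (A i)]

lemma card_smul_sum_piecewise_erase {M : Type*} [AddCommMonoid M] {s : Finset ι} {i : ι}
    (hi : i ∈ s) (F : (∀ j, A j) → M) (x : ∀ j, A j) :
    Fintype.card (A i) • ∑ u, F ((s.erase i).piecewise x u)
      = ∑ u, ∑ a, F (update (s.piecewise x u) i a) := by
  simp only [← sum_sum_update i, piecewise_erase_update hi]

lemma card_smul_coupledSum {s : Finset ι} {i : ι} (hi : i ∈ s) :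
    Fintype.card (A i) • coupledSum T S s = ∑ x, ∑ u, ∑ v, ∑ a,
      eChar (T (update (s.piecewise x u) i a) + S (update (s.piecewise x v) i a)) := by
  rw [coupledSum, ← sum_sum_update i]
  refine sum_congr rfl fun x _ => ?_
  simp only [← update_piecewise_of_mem (hi := hi), sum_mul_sum, eChar_add]
  rw [sum_comm]
  exact sum_congr rfl fun u _ => sum_comm

variable {T S}

lemma coupledSum_erase_le (hT : IsMultiadditive T) (hS : IsMultiadditive S) {s : Finset ι}
    {i : ι} (hi : i ∈ s) : coupledSum T S (s.erase i) ≤ coupledSum T S s := by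
  suffices key : Fintype.card (A i) • Fintype.card (A i) • coupledSum T S (s.erase i)
      ≤ Fintype.card (A i) • Fintype.card (A i) • coupledSum T S s by
    have hc : (0 : ℂ) < Fintype.card (A i) := by simp [Fintype.card_pos]
    simp only [nsmul_eq_mul] at key
    exact le_of_mul_le_mul_left (le_of_mul_le_mul_left key hc) hc
  calc Fintype.card (A i) • Fintype.card (A i) • coupledSum T S (s.erase i)
      = ∑ x, (Fintype.card (A i) • ∑ u, eChar (T ((s.erase i).piecewise x u)))
          * (Fintype.card (A i) • ∑ v, eChar (S ((s.erase i).piecewise x v))) := by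
        rw [coupledSum, smul_sum, smul_sum]
        exact sum_congr rfl fun x _ => by rw [smul_mul_smul_comm, mul_smul]
    _ = ∑ x, ∑ u, ∑ v, (∑ a, eChar (T (update (s.piecewise x u) i a)))
          * ∑ a, eChar (S (update (s.piecewise x v) i a)) := by
        refine sum_congr rfl fun x _ => ?_
        rw [card_smul_sum_piecewise_erase hi (fun y => eChar (T y)),
          card_smul_sum_piecewise_erase hi (fun y => eChar (S y)), sum_mul_sum]
    _ ≤ ∑ x, ∑ u, ∑ v, Fintype.card (A i) • ∑ a,
          eChar (T (update (s.piecewise x u) i a) + S (update (s.piecewise x v) i a)) :=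
        sum_le_sum fun x _ => sum_le_sum fun u _ => sum_le_sum fun v _ => by
          rw [nsmul_eq_mul]
          exact sum_eChar_mul_sum_eChar_le (hT.lineHom _ i) (hS.lineHom _ i)
    _ = Fintype.card (A i) • Fintype.card (A i) • coupledSum T S s := by
        rw [card_smul_coupledSum T S hi]
        simp only [smul_sum]

lemma coupledSum_empty_le (hT : IsMultiadditive T) (hS : IsMultiadditive S) (s : Finset ι) :
    coupledSum T S ∅ ≤ coupledSum T S s := by
  induction s using Finset.induction_on with
  | empty => rfl
  | insert i t hit ih =>
    have hstep := coupledSum_erase_le hT hS (mem_insert_self i t)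
    rw [erase_insert hit] at hstep
    exact ih.trans hstep

end Coupling

section Bias

variable {ι : Type} [Fintype ι] [DecidableEq ι] {A : ι → Type} [∀ i, AddCommGroup (A i)]
  [∀ i, Fintype (A i)]

lemma bias_zero : bias (fun _ : ∀ i, A i => (0 : AddCircle (1 : ℝ))) = 1 := by
  simp only [bias, eChar_zero, sum_const, card_univ, nsmul_eq_mul, mul_one]
  exact div_self (Nat.cast_ne_zero.2 Fintype.card_ne_zero)

lemma bias_mul_bias_le {T S : (∀ i, A i) → AddCircle (1 : ℝ)} (hT : IsMultiadditive T)
    (hS : IsMultiadditive S) : bias T * bias S ≤ bias fun x => T x + S x := by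
  have hN : (0 : ℂ) < Fintype.card (∀ i, A i) := Nat.cast_pos.2 Fintype.card_pos
  have key := coupledSum_empty_le hT hS univ
  rw [coupledSum_empty, coupledSum_univ, sq, mul_assoc] at key
  rw [bias, bias, bias, div_mul_div_comm, ← mul_div_mul_left _ (Fintype.card (∀ i, A i) : ℂ) hN.ne']
  exact div_le_div_of_nonneg_right (le_of_mul_le_mul_left key hN) (mul_pos hN hN).le

lemma prod_le_bias_sum {κ : Type*} {ψ : κ → (∀ i, A i) → AddCircle (1 : ℝ)} {b : κ → ℝ}
    (s : Finset κ) (hψ : ∀ j ∈ s, IsMultiadditive (ψ j)) (hb₀ : ∀ j ∈ s, 0 ≤ b j)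
    (hb : ∀ j ∈ s, (b j : ℂ) ≤ bias (ψ j)) :
    ((∏ j ∈ s, b j : ℝ) : ℂ) ≤ bias fun x => ∑ j ∈ s, ψ j x := by
  classical
  induction s using Finset.induction_on with
  | empty => simp [bias_zero]
  | insert a t hat ih =>
    simp only [mem_insert, forall_eq_or_imp] at hψ hb₀ hb
    rw [prod_insert hat, Complex.ofReal_mul]
    simp_rw [sum_insert hat]
    calc _ ≤ bias (ψ a) * bias (fun x => ∑ j ∈ t, ψ j x) :=
          mul_le_mul hb.1 (ih hψ.2 hb₀.2 hb.2) (by exact_mod_cast prod_nonneg hb₀.2)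
            ((Complex.zero_le_real.2 hb₀.1).trans hb.1)
      _ ≤ _ := bias_mul_bias_le hψ.1 (isMultiadditive_finset_sum t hψ.2)

end Bias

section Factorization

open ZMod

lemma mq_eq_toAddCircle (q : ℕ) [NeZero q] (x y : ZMod q) : mq q x y = toAddCircle (x * y) := by
  rw [mq, ← toAddCircle_natCast]
  simp

lemma sum_eChar_toAddCircle_mul {q : ℕ} [NeZero q] (c : ZMod q) :
    ∑ t : ZMod q, eChar (toAddCircle (t * c)) = if c = 0 then (q : ℂ) else 0 := by
  split_ifs with hc
  · simp [hc, eChar_zero]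
  · refine sum_eChar_eq_zero (f := toAddCircle.comp (AddMonoidHom.mulRight c)) fun h => hc ?_
    simpa using DFunLike.congr_fun h 1

lemma card_mul_card_le_mul_sum_eChar {X Y : Type*} [Fintype X] [Fintype Y] {q : ℕ} [NeZero q]
    (f : X → ZMod q) (g : Y → ZMod q) (hf : ∀ t, 0 ≤ ∑ x, eChar (toAddCircle (t * f x)))
    (hg : ∀ t, 0 ≤ ∑ y, eChar (toAddCircle (t * g y))) :
    (Fintype.card X * Fintype.card Y : ℂ) ≤ q * ∑ x, ∑ y, eChar (toAddCircle (f x * g y)) := by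
  classical
  set M := #{x | f x = 0}
  have hcount : (Fintype.card X : ℂ) ≤ q * M :=
    calc (Fintype.card X : ℂ) = ∑ x, eChar (toAddCircle (0 * f x)) := by simp [eChar_zero]
      _ ≤ ∑ t, ∑ x, eChar (toAddCircle (t * f x)) :=
        single_le_sum (fun t _ => hf t) (mem_univ 0)
      _ = q * M := by
        rw [sum_comm]
        simp [sum_eChar_toAddCircle_mul, sum_ite, M, mul_comm]
  have hzero : (M * Fintype.card Y : ℂ) ≤ ∑ x, ∑ y, eChar (toAddCircle (f x * g y)) :=
    calc (M * Fintype.card Y : ℂ) = ∑ x, if f x = 0 then (Fintype.card Y : ℂ) else 0 := by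
          simp [sum_ite, M]
      _ ≤ _ := sum_le_sum fun x _ => by
          split_ifs with hx
          · simp [hx, eChar_zero]
          · exact hg (f x)
  calc (Fintype.card X * Fintype.card Y : ℂ) ≤ q * M * Fintype.card Y :=
        mul_le_mul_of_nonneg_right hcount (Nat.cast_nonneg _)
    _ ≤ _ := by
        rw [mul_assoc]
        exact mul_le_mul_of_nonneg_left hzero (Nat.cast_nonneg _)

variable {ι : Type} [Fintype ι] [DecidableEq ι] {A : ι → Type} [∀ i, Fintype (A i)]

def piEquivRestrictProdCompl (I : Finset ι) :
    (∀ i, A i) ≃ (∀ i : I, A i) × ∀ i : (Iᶜ : Finset ι), A i where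
  toFun x := (fun i => x i, fun i => x i)
  invFun p i := if h : i ∈ I then p.1 ⟨i, h⟩ else p.2 ⟨i, mem_compl.2 h⟩
  left_inv x := by
    funext i
    by_cases h : i ∈ I <;> simp [h]
  right_inv p := by
    ext i
    · simp [i.2]
    · simp [mem_compl.1 i.2]

lemma sum_pi_eq_sum_sum_restrict {M : Type*} [AddCommMonoid M] (I : Finset ι)
    (F : (∀ i : I, A i) → (∀ i : (Iᶜ : Finset ι), A i) → M) :
    ∑ x : ∀ i, A i, F (fun i => x i) (fun i => x i) = ∑ y, ∑ z, F y z := by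
  rw [← Fintype.sum_prod_type']
  exact Fintype.sum_equiv (piEquivRestrictProdCompl I) _ _ fun x => rfl

variable [∀ i, AddCommGroup (A i)]

lemma inv_le_bias_of_factorsThroughMq {q : ℕ} [NeZero q] {ψ : (∀ i, A i) → AddCircle (1 : ℝ)}
    (h : FactorsThroughMq q ψ) : (((q : ℝ)⁻¹ : ℝ) : ℂ) ≤ bias ψ := by
  obtain ⟨I, hI, hIc, φ₁, φ₂, h₁, h₂, hψ⟩ := h
  have : Nonempty I := hI.coe_sort
  have : Nonempty (Iᶜ : Finset ι) :=
    (nonempty_iff_ne_empty.2 (mt (compl_eq_empty_iff I).1 hIc)).coe_sort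
  have hN : (Fintype.card (∀ i, A i) : ℂ)
      = Fintype.card (∀ i : I, A i) * Fintype.card (∀ i : (Iᶜ : Finset ι), A i) := by
    simpa using sum_pi_eq_sum_sum_restrict I fun _ _ => (1 : ℂ)
  have hsum : ∑ x, eChar (ψ x) = ∑ y, ∑ z, eChar (toAddCircle (φ₁ y * φ₂ z)) := by
    simp only [hψ, mq_eq_toAddCircle]
    exact sum_pi_eq_sum_sum_restrict I fun y z => eChar (toAddCircle (φ₁ y * φ₂ z))
  have key := card_mul_card_le_mul_sum_eChar φ₁ φ₂
    (fun t => sum_eChar_nonneg_of_isMultiadditive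
      (h₁.addMonoidHom_comp (toAddCircle.comp (AddMonoidHom.mulLeft t))))
    (fun t => sum_eChar_nonneg_of_isMultiadditive
      (h₂.addMonoidHom_comp (toAddCircle.comp (AddMonoidHom.mulLeft t))))
  have hq : (0 : ℂ) < q := Nat.cast_pos.2 (NeZero.pos q)
  rw [bias, hsum, hN, le_div_iff₀ (by positivity), Complex.ofReal_inv, Complex.ofReal_natCast,
    inv_mul_le_iff₀ hq]
  exact key

end Factorization

theorem bias_ge_of_low_rank_general (k r : ℕ) (A : Fin k → Type) [∀ i, AddCommGroup (A i)]
    [∀ i, Fintype (A i)] (φ : (∀ i, A i) → AddCircle (1 : ℝ))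
    (ψ : Fin r → ((∀ i, A i) → AddCircle (1 : ℝ))) (hψ : ∀ j, IsMultiadditive (ψ j))
    (q : Fin r → ℕ) (hq : ∀ j, IsPrimePow (q j))
    (hfac : ∀ j, FactorsThroughMq (q j) (ψ j))
    (hsum : ∀ x, φ x = ∑ j, ψ j x) :
    ((∏ j, ((q j : ℝ))⁻¹ : ℝ) : ℂ) ≤ bias φ := by
  have (j : Fin r) : NeZero (q j) := ⟨(hq j).ne_zero⟩
  rw [show φ = fun x => ∑ j, ψ j x from funext hsum]
  exact prod_le_bias_sum univ (fun j _ => hψ j) (fun j _ => by positivity)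
    (fun j _ => inv_le_bias_of_factorsThroughMq (hfac j))

/-- If the multilinear map `φ` is the sum of multilinear maps `φ_1, …, φ_r`, where `φ_i` factors
through `m_{q_i}` for a prime power `q_i`, then `bias(φ) ≥ q_1⁻¹ ⋯ q_r⁻¹`. -/
theorem bias_ge_of_low_rank (k r : ℕ) (A : Fin k → Type) [∀ i, AddCommGroup (A i)]
    [∀ i, Fintype (A i)] (φ : (∀ i, A i) → AddCircle (1 : ℝ)) (hφ : IsMultiadditive φ)
    (ψ : Fin r → ((∀ i, A i) → AddCircle (1 : ℝ))) (hψ : ∀ j, IsMultiadditive (ψ j))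
    (q : Fin r → ℕ) (hq : ∀ j, IsPrimePow (q j))
    (hfac : ∀ j, FactorsThroughMq (q j) (ψ j))
    (hsum : ∀ x, φ x = ∑ j, ψ j x) :
    ((∏ j, ((q j : ℝ))⁻¹ : ℝ) : ℂ) ≤ bias φ :=
  bias_ge_of_low_rank_general k r A φ ψ hψ q hq hfac hsum
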